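/- arXiv:2111.04926 — 2 statements merged into one kernel-verified Lean document; each statement's English description precedes it below -/
import Mathlib

section
/- The function g(a) = a·Φ(-a), where Φ is the standard normal CDF, has a unique maximizer a* over [0, ∞); moreover g is strictly increasing on [0, a*) and strictly decreasing on (a*, ∞). -/
/-- The density of the standard normal distribution. -/
noncomputable def stdGaussianPDF (x : ℝ) : ℝ :=
  (Real.sqrt (2 * Real.pi))⁻¹ * Real.exp (-(x ^ 2) / 2)

/-- The cumulative distribution function of the standard normal distribution. -/
noncomputable def stdGaussianCDF (x : ℝ) : ℝ :=
  ∫ t in Set.Iic x, stdGaussianPDF t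

/-!
Write `g a = a Φ(-a)`. Its derivative `h a = Φ(-a) - a φ(a)` has derivative `(a² - 2) φ(a)`,
so `h` is strictly decreasing on `[0, √2]`. Since `h 0 = Φ 0 > 0` and, by Mills' ratio
`a Φ(-a) < φ(a)`, `h a < 0` for `a ≥ 1`, `h` changes sign exactly once, at some `a* ∈ [0, 1]`:
`g` increases up to `a*` and decreases after it.
-/

open Set MeasureTheory Real Filter Topology ProbabilityTheory

lemma stdGaussianPDF_eq_gaussianPDFReal : stdGaussianPDF = gaussianPDFReal 0 1 := by
  ext x
  simp [stdGaussianPDF, gaussianPDFReal]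

lemma stdGaussianPDF_pos (x : ℝ) : 0 < stdGaussianPDF x := by
  rw [stdGaussianPDF_eq_gaussianPDFReal]
  exact gaussianPDFReal_pos _ _ _ one_ne_zero

lemma integrable_stdGaussianPDF : Integrable stdGaussianPDF :=
  stdGaussianPDF_eq_gaussianPDFReal ▸ integrable_gaussianPDFReal 0 1

lemma stdGaussianPDF_neg (x : ℝ) : stdGaussianPDF (-x) = stdGaussianPDF x := by
  simp [stdGaussianPDF]

lemma hasDerivAt_stdGaussianPDF (x : ℝ) :
    HasDerivAt stdGaussianPDF (-x * stdGaussianPDF x) x := by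
  have hexp : HasDerivAt (fun x : ℝ => -(x ^ 2) / 2) (-x) x := by
    simpa using ((hasDerivAt_pow 2 x).neg.div_const 2).congr_deriv (by ring)
  exact (hexp.exp.const_mul (√(2 * π))⁻¹).congr_deriv (by unfold stdGaussianPDF; ring)

lemma continuous_stdGaussianPDF : Continuous stdGaussianPDF := by
  unfold stdGaussianPDF; fun_prop

lemma tendsto_stdGaussianPDF_atTop : Tendsto stdGaussianPDF atTop (𝓝 0) := by
  have hsq : Tendsto (fun x : ℝ => x ^ 2 / 2) atTop atTop :=
    (tendsto_pow_atTop two_ne_zero).atTop_div_const two_pos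
  have := (tendsto_exp_neg_atTop_nhds_zero.comp hsq).const_mul (√(2 * π))⁻¹
  rw [mul_zero] at this
  exact this.congr fun x => by simp [stdGaussianPDF, neg_div]

lemma integrable_mul_stdGaussianPDF : Integrable fun t => t * stdGaussianPDF t := by
  refine ((integrable_mul_exp_neg_mul_sq (b := 1 / 2) one_half_pos).const_mul
    (√(2 * π))⁻¹).congr (Eventually.of_forall fun t => ?_)
  simp only [stdGaussianPDF]; ring_nf

lemma integral_Ioi_mul_stdGaussianPDF (a : ℝ) :
    ∫ t in Ioi a, t * stdGaussianPDF t = stdGaussianPDF a := by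
  have := integral_Ioi_of_hasDerivAt_of_tendsto' (a := a) (f := fun t => -stdGaussianPDF t)
    (fun x _ => ((hasDerivAt_stdGaussianPDF x).neg).congr_deriv (by ring))
    integrable_mul_stdGaussianPDF.integrableOn (by simpa using tendsto_stdGaussianPDF_atTop.neg)
  simpa using this

lemma hasDerivAt_stdGaussianCDF (x : ℝ) : HasDerivAt stdGaussianCDF (stdGaussianPDF x) x := by
  have hdecomp :
      stdGaussianCDF = fun y => stdGaussianCDF 0 + ∫ t in (0 : ℝ)..y, stdGaussianPDF t := by
    ext y
    rw [← intervalIntegral.integral_Iic_sub_Iic integrable_stdGaussianPDF.integrableOn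
      integrable_stdGaussianPDF.integrableOn]
    simp only [stdGaussianCDF]; ring
  rw [hdecomp]
  exact ((continuous_stdGaussianPDF.integral_hasStrictDerivAt 0 x).hasDerivAt).const_add _

lemma stdGaussianCDF_neg (a : ℝ) : stdGaussianCDF (-a) = ∫ t in Ioi a, stdGaussianPDF t := by
  rw [stdGaussianCDF, ← neg_neg a, ← integral_comp_neg_Iic, neg_neg]
  simp only [stdGaussianPDF_neg]

lemma stdGaussianCDF_pos (x : ℝ) : 0 < stdGaussianCDF x := by
  rw [stdGaussianCDF, setIntegral_pos_iff_support_of_nonneg_ae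
    (Eventually.of_forall fun t => (stdGaussianPDF_pos t).le)
    integrable_stdGaussianPDF.integrableOn,
    Function.support_eq_univ fun t => (stdGaussianPDF_pos t).ne', univ_inter]
  simp

-- Mills' ratio bound `Φ(-a) < φ(a) / a`, read as `∫_{t > a} (t - a) φ(t) dt > 0`.
lemma mul_stdGaussianCDF_neg_lt (a : ℝ) : a * stdGaussianCDF (-a) < stdGaussianPDF a := by
  have hint : IntegrableOn (fun t => (t - a) * stdGaussianPDF t) (Ioi a) :=
    (integrable_mul_stdGaussianPDF.sub (integrable_stdGaussianPDF.const_mul a)).integrableOn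
      |>.congr_fun (fun t _ => by simp only [Pi.sub_apply]; ring) measurableSet_Ioi
  have hpos : 0 < ∫ t in Ioi a, (t - a) * stdGaussianPDF t := by
    have hsupp : Ioi a ⊆ Function.support fun t => (t - a) * stdGaussianPDF t :=
      fun t ht => (mul_pos (sub_pos.2 ht) (stdGaussianPDF_pos t)).ne'
    rw [setIntegral_pos_iff_support_of_nonneg_ae ?_ hint, inter_eq_right.2 hsupp]
    · simp
    · filter_upwards [ae_restrict_mem measurableSet_Ioi] with t ht
      exact mul_nonneg (sub_pos.2 ht).le (stdGaussianPDF_pos t).le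
  have hsplit : ∫ t in Ioi a, (t - a) * stdGaussianPDF t
      = stdGaussianPDF a - a * stdGaussianCDF (-a) := by
    simp_rw [sub_mul]
    rw [integral_sub integrable_mul_stdGaussianPDF.integrableOn
      (integrable_stdGaussianPDF.const_mul a).integrableOn, integral_const_mul,
      integral_Ioi_mul_stdGaussianPDF, stdGaussianCDF_neg]
  linarith

noncomputable def aPhiDeriv (a : ℝ) : ℝ := stdGaussianCDF (-a) - a * stdGaussianPDF a

lemma hasDerivAt_stdGaussianCDF_neg (a : ℝ) :
    HasDerivAt (fun x => stdGaussianCDF (-x)) (-stdGaussianPDF a) a := by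
  have := (hasDerivAt_stdGaussianCDF (-a)).comp a (hasDerivAt_neg a)
  simpa [Function.comp_def, stdGaussianPDF_neg] using this

lemma hasDerivAt_mul_stdGaussianCDF_neg (a : ℝ) :
    HasDerivAt (fun x => x * stdGaussianCDF (-x)) (aPhiDeriv a) a :=
  ((hasDerivAt_id a).mul (hasDerivAt_stdGaussianCDF_neg a)).congr_deriv
    (by simp only [aPhiDeriv, id]; ring)

lemma hasDerivAt_aPhiDeriv (a : ℝ) :
    HasDerivAt aPhiDeriv ((a ^ 2 - 2) * stdGaussianPDF a) a :=
  ((hasDerivAt_stdGaussianCDF_neg a).sub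
    ((hasDerivAt_id a).mul (hasDerivAt_stdGaussianPDF a))).congr_deriv (by simp only [id]; ring)

lemma strictAntiOn_aPhiDeriv : StrictAntiOn aPhiDeriv (Icc (-√2) √2) := by
  refine strictAntiOn_of_deriv_neg (convex_Icc _ _)
    (fun x _ => (hasDerivAt_aPhiDeriv x).continuousAt.continuousWithinAt) fun x hx => ?_
  rw [interior_Icc] at hx
  have hsq : x ^ 2 < 2 := by
    simpa using sq_lt_sq' hx.1 hx.2
  rw [(hasDerivAt_aPhiDeriv x).deriv]
  exact mul_neg_of_neg_of_pos (by linarith) (stdGaussianPDF_pos x)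

lemma aPhiDeriv_neg_of_one_le {a : ℝ} (ha : 1 ≤ a) : aPhiDeriv a < 0 := by
  have hφ : stdGaussianPDF a ≤ a * (a * stdGaussianPDF a) := by
    rw [← mul_assoc]
    exact le_mul_of_one_le_left (stdGaussianPDF_pos a).le (one_le_mul_of_one_le_of_one_le ha ha)
  have hmills : a * stdGaussianCDF (-a) < a * (a * stdGaussianPDF a) :=
    (mul_stdGaussianCDF_neg_lt a).trans_le hφ
  rw [aPhiDeriv, sub_neg]
  exact lt_of_mul_lt_mul_left hmills (by linarith)

lemma exists_aPhiDeriv_sign_change :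
    ∃ c ∈ Icc (0 : ℝ) 1,
      (∀ a ∈ Ico 0 c, 0 < aPhiDeriv a) ∧ ∀ a ∈ Ioi c, aPhiDeriv a < 0 := by
  have hone : (1 : ℝ) ≤ √2 := Real.one_le_sqrt.2 one_le_two
  have hIcc : Icc (0 : ℝ) 1 ⊆ Icc (-√2) √2 := Icc_subset_Icc (by linarith) hone
  have hcont : ContinuousOn aPhiDeriv (Icc 0 1) :=
    fun x _ => (hasDerivAt_aPhiDeriv x).continuousAt.continuousWithinAt
  have hzero : (0 : ℝ) ∈ Icc (aPhiDeriv 1) (aPhiDeriv 0) :=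
    ⟨(aPhiDeriv_neg_of_one_le le_rfl).le, by simpa [aPhiDeriv] using (stdGaussianCDF_pos 0).le⟩
  obtain ⟨c, hc, hc0⟩ := intermediate_value_Icc' zero_le_one hcont hzero
  have hcIcc : c ∈ Icc (-√2) √2 := hIcc hc
  refine ⟨c, hc, fun a ha => ?_, fun a ha => ?_⟩
  · rw [← hc0]
    exact strictAntiOn_aPhiDeriv (hIcc ⟨ha.1, ha.2.le.trans hc.2⟩) hcIcc ha.2
  · rcases le_or_gt a 1 with ha1 | ha1
    · rw [← hc0]
      exact strictAntiOn_aPhiDeriv hcIcc (hIcc ⟨hc.1.trans (le_of_lt ha), ha1⟩) ha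
    · exact aPhiDeriv_neg_of_one_le ha1.le

lemma lt_of_strictMonoOn_Icc_of_strictAntiOn_Ici {f : ℝ → ℝ} {l c a : ℝ}
    (hmono : StrictMonoOn f (Icc l c)) (hanti : StrictAntiOn f (Ici c)) (hla : l ≤ a)
    (hac : a ≠ c) : f a < f c := by
  rcases hac.lt_or_gt with hlt | hgt
  · exact hmono ⟨hla, hlt.le⟩ ⟨hla.trans hlt.le, le_rfl⟩ hlt
  · exact hanti self_mem_Ici hgt.le hgt

/-- The function `g a = a * Φ(-a)` has a unique maximizer `a*` over `[0, ∞)`;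
moreover `g` is strictly increasing on `[0, a*)` and strictly decreasing on `(a*, ∞)`. -/
theorem unique_maximizer_aPhi :
    ∃ astar : ℝ, 0 ≤ astar ∧
      (∀ a, 0 ≤ a → a * stdGaussianCDF (-a) ≤ astar * stdGaussianCDF (-astar)) ∧
      (∀ a, 0 ≤ a →
        (∀ b, 0 ≤ b → b * stdGaussianCDF (-b) ≤ a * stdGaussianCDF (-a)) → a = astar) ∧
      StrictMonoOn (fun a => a * stdGaussianCDF (-a)) (Set.Ico 0 astar) ∧
      StrictAntiOn (fun a => a * stdGaussianCDF (-a)) (Set.Ioi astar) := by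
  obtain ⟨c, hc, hpos, hneg⟩ := exists_aPhiDeriv_sign_change
  have hcont : Continuous fun a => a * stdGaussianCDF (-a) :=
    continuous_iff_continuousAt.2 fun x => (hasDerivAt_mul_stdGaussianCDF_neg x).continuousAt
  have hmono : StrictMonoOn (fun a => a * stdGaussianCDF (-a)) (Icc 0 c) := by
    refine strictMonoOn_of_deriv_pos (convex_Icc 0 c) hcont.continuousOn fun x hx => ?_
    rw [interior_Icc] at hx
    rw [(hasDerivAt_mul_stdGaussianCDF_neg x).deriv]
    exact hpos x (Ioo_subset_Ico_self hx)
  have hanti : StrictAntiOn (fun a => a * stdGaussianCDF (-a)) (Ici c) := by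
    refine strictAntiOn_of_deriv_neg (convex_Ici c) hcont.continuousOn fun x hx => ?_
    rw [interior_Ici] at hx
    rw [(hasDerivAt_mul_stdGaussianCDF_neg x).deriv]
    exact hneg x hx
  have hlt : ∀ a, 0 ≤ a → a ≠ c → a * stdGaussianCDF (-a) < c * stdGaussianCDF (-c) :=
    fun _ => lt_of_strictMonoOn_Icc_of_strictAntiOn_Ici hmono hanti
  refine ⟨c, hc.1, fun a ha => ?_, fun a ha hmax => ?_, hmono.mono Ico_subset_Icc_self,
    hanti.mono Ioi_subset_Ici_self⟩
  · rcases eq_or_ne a c with rfl | hac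
    · exact le_rfl
    · exact (hlt a ha hac).le
  · by_contra hac
    exact (hlt a ha hac).not_ge (hmax c hc.1)
end

section
/- Let V be a real vector space, L : V → ℝ and m : V → ℝⁿ linear maps, and Θ ⊆ V a convex set. Then the modulus of continuity ω(ε) = sup{L(θ) : ‖m(θ)‖ ≤ ε, θ ∈ Θ} is concave in ε on [0, ∞) (as an extended-real-valued function). -/
/-! If `θ₁`, `θ₂` are feasible at levels `ε₁`, `ε₂`, then, by convexity of `Θ` and of
`θ ↦ ‖m θ‖`, the point `λ θ₁ + (1 - λ) θ₂` is feasible at level `λ ε₁ + (1 - λ) ε₂`, where `L`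
takes the value `λ L θ₁ + (1 - λ) L θ₂`. Multiplication by a positive real commutes with `sSup`
in `EReal`, so taking suprema over `θ₁` and `θ₂` gives concavity. -/

/-- The modulus of continuity `ω(ε) = sup{L(θ) : ‖m(θ)‖ ≤ ε, θ ∈ Θ}`, as an
extended-real-valued function (taking value `⊥` when the constraint set is empty). -/
noncomputable def modulusE {V : Type*} [AddCommGroup V] [Module ℝ V] {n : ℕ}
    (L : V →ₗ[ℝ] ℝ) (m : V →ₗ[ℝ] EuclideanSpace ℝ (Fin n)) (Θ : Set V) (ε : ℝ) : EReal :=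
  sSup ((fun θ => (L θ : EReal)) '' {θ ∈ Θ | ‖m θ‖ ≤ ε})

namespace EReal

lemma coe_mul_sSup_of_pos {c : ℝ} (hc : 0 < c) (s : Set EReal) :
    (c : EReal) * sSup s = sSup (((c : EReal) * ·) '' s) := by
  have hc' : (0 : EReal) < c := by exact_mod_cast hc
  refine le_antisymm ?_ (sSup_le ?_)
  · rw [mul_comm, ← EReal.le_div_iff_mul_le hc' (coe_ne_top c)]
    refine sSup_le fun x hx => ?_
    rw [EReal.le_div_iff_mul_le hc' (coe_ne_top c), mul_comm]
    exact le_sSup (Set.mem_image_of_mem _ hx)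
  · rintro _ ⟨x, hx, rfl⟩
    exact mul_le_mul_of_nonneg_left (le_sSup hx) hc'.le

lemma sSup_add_sSup_le {s t : Set EReal} {z : EReal} (h : ∀ x ∈ s, ∀ y ∈ t, x + y ≤ z) :
    sSup s + sSup t ≤ z := by
  refine add_le_of_forall_lt fun a ha b hb => ?_
  obtain ⟨x, hx, hax⟩ := lt_sSup_iff.1 ha
  obtain ⟨y, hy, hby⟩ := lt_sSup_iff.1 hb
  exact (add_le_add hax.le hby.le).trans (h x hx y hy)

end EReal

section Modulus

variable {V : Type*} [AddCommGroup V] [Module ℝ V] {n : ℕ}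
  {L : V →ₗ[ℝ] ℝ} {m : V →ₗ[ℝ] EuclideanSpace ℝ (Fin n)} {Θ : Set V}

lemma coe_le_modulusE {θ : V} {ε : ℝ} (hθ : θ ∈ Θ) (hε : ‖m θ‖ ≤ ε) :
    (L θ : EReal) ≤ modulusE L m Θ ε :=
  le_sSup ⟨θ, ⟨hθ, hε⟩, rfl⟩

lemma coe_convex_combination_le_modulusE (hΘ : Convex ℝ Θ) {θ₁ θ₂ : V} {ε₁ ε₂ a b : ℝ}
    (h₁ : θ₁ ∈ Θ) (hε₁ : ‖m θ₁‖ ≤ ε₁) (h₂ : θ₂ ∈ Θ) (hε₂ : ‖m θ₂‖ ≤ ε₂)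
    (ha : 0 ≤ a) (hb : 0 ≤ b) (hab : a + b = 1) :
    ((a * L θ₁ + b * L θ₂ : ℝ) : EReal) ≤ modulusE L m Θ (a * ε₁ + b * ε₂) := by
  have hnorm : ‖m (a • θ₁ + b • θ₂)‖ ≤ a * ‖m θ₁‖ + b * ‖m θ₂‖ :=
    ((convexOn_norm convex_univ).comp_linearMap m).2 trivial trivial ha hb hab
  have hε : ‖m (a • θ₁ + b • θ₂)‖ ≤ a * ε₁ + b * ε₂ := hnorm.trans (by gcongr)
  simpa using coe_le_modulusE (L := L) (hΘ h₁ h₂ ha hb hab) hε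

end Modulus

/-- If `Θ` is convex and `L`, `m` are linear, then the modulus of continuity
`ω(ε) = sup{L(θ) : ‖m(θ)‖ ≤ ε, θ ∈ Θ}` is concave in `ε` on `[0, ∞)`. -/
theorem modulus_concaveOn {V : Type*} [AddCommGroup V] [Module ℝ V] (n : ℕ)
    (L : V →ₗ[ℝ] ℝ) (m : V →ₗ[ℝ] EuclideanSpace ℝ (Fin n))
    (Θ : Set V) (hΘ : Convex ℝ Θ) :
    ∀ ε₁ ∈ Set.Ici (0 : ℝ), ∀ ε₂ ∈ Set.Ici (0 : ℝ), ∀ lam ∈ Set.Icc (0 : ℝ) 1,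
      (lam : EReal) * modulusE L m Θ ε₁ + ((1 - lam : ℝ) : EReal) * modulusE L m Θ ε₂ ≤
        modulusE L m Θ (lam * ε₁ + (1 - lam) * ε₂) := by
  rintro ε₁ - ε₂ - lam ⟨hl0, hl1⟩
  -- The endpoints are split off since `(0 : EReal) * ⊥ = 0` while `ω` may be `⊥`.
  rcases hl0.eq_or_lt with rfl | hlam
  · simp
  rcases hl1.eq_or_lt with rfl | hlam'
  · simp
  rw [modulusE, modulusE, EReal.coe_mul_sSup_of_pos hlam,
    EReal.coe_mul_sSup_of_pos (sub_pos.2 hlam')]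
  refine EReal.sSup_add_sSup_le ?_
  rintro _ ⟨_, ⟨θ₁, ⟨h₁, hε₁⟩, rfl⟩, rfl⟩ _ ⟨_, ⟨θ₂, ⟨h₂, hε₂⟩, rfl⟩, rfl⟩
  exact_mod_cast coe_convex_combination_le_modulusE hΘ h₁ hε₁ h₂ hε₂ hlam.le
    (sub_pos.2 hlam').le (add_sub_cancel lam 1)
end
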